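/- Let H be a nonempty family of free filters on ℕ, each of which, as a subset of 2^ℕ, does not have the Baire property, and suppose the intersection ⋂H has the Baire property. Then there exists a family G of at most |H| many groupwise dense subsets of [ℕ]^ℕ with ⋂G = ∅. (This expresses Repický's inequality 𝔤 ≤ 𝔣_ℳ.) -/

import Mathlib

open Filter Set

/-- The subset of the Cantor space `ℕ → Bool` corresponding to a filter `F` on `ℕ`,
identifying a subset of `ℕ` with its characteristic function. -/
def filterSet (F : Filter ℕ) : Set (ℕ → Bool) :=
  {x | {n | x n = true} ∈ F}

/-- A set `S ⊆ 2^ℕ` has the Baire property if it is the symmetric difference of an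
open set and a meager set. -/
def HasBaireProperty (S : Set (ℕ → Bool)) : Prop :=
  ∃ U M : Set (ℕ → Bool), IsOpen U ∧ IsMeagre M ∧ S = symmDiff U M

/-- `A ⊆* B`: `A` is almost contained in `B`, i.e. `A \ B` is finite. -/
def AlmostSubset (A B : Set ℕ) : Prop := (A \ B).Finite

/-- A family `g ⊆ [ℕ]^ℕ` is groupwise dense if: every infinite set has an infinite subset
in `g`; `g` is downward closed under `⊆*` among infinite sets; and for every partition of
`ℕ` into finite sets `{Iₙ}` there is an infinite `a ⊆ ℕ` with `⋃_{n ∈ a} Iₙ ∈ g`. -/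
def GroupwiseDense (g : Set (Set ℕ)) : Prop :=
  g ⊆ {x : Set ℕ | x.Infinite} ∧
  (∀ x : Set ℕ, x.Infinite → ∃ y ∈ g, y ⊆ x) ∧
  (∀ x y : Set ℕ, x.Infinite → AlmostSubset x y → y ∈ g → x ∈ g) ∧
  (∀ I : ℕ → Set ℕ, (∀ n, (I n).Finite) → Pairwise (Function.onFun Disjoint I) →
    (⋃ n, I n) = Set.univ → ∃ a : Set ℕ, a.Infinite ∧ (⋃ n ∈ a, I n) ∈ g)




/-- cylinder -/
def Cyl (x : ℕ → Bool) (N : ℕ) : Set (ℕ → Bool) := {y | ∀ i, i < N → y i = x i}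

lemma isOpen_cyl (x : ℕ → Bool) (N : ℕ) : IsOpen (Cyl x N) := by
  have : Cyl x N = ⋂ i ∈ Finset.range N, {y : ℕ → Bool | y i = x i} := by
    ext y; simp [Cyl]
  rw [this]
  refine isOpen_biInter_finset fun i _ => ?_
  show IsOpen ((fun p : ℕ → Bool => p i) ⁻¹' {x i})
  exact IsOpen.preimage (continuous_apply i) (isOpen_discrete _)

lemma isClosed_eval (i : ℕ) (b : Bool) : IsClosed {y : ℕ → Bool | y i = b} := by
  show IsClosed ((fun p : ℕ → Bool => p i) ⁻¹' {b})
  exact IsClosed.preimage (continuous_apply i) (isClosed_discrete _)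

lemma cyl_self (x : ℕ → Bool) (N : ℕ) : x ∈ Cyl x N := fun _ _ => rfl

lemma exists_cyl_subset {U : Set (ℕ → Bool)} (hU : IsOpen U) {x : ℕ → Bool} (hx : x ∈ U) :
    ∃ N, Cyl x N ⊆ U := by
  obtain ⟨I, u, h1, h2⟩ := isOpen_pi_iff.mp hU x hx
  refine ⟨I.sup id + 1, fun y hy => h2 ?_⟩
  intro a ha
  have : y a = x a := hy a (Nat.lt_succ_of_le (Finset.le_sup (f := id) ha))
  rw [this]
  exact (h1 a ha).2

lemma IsMeagre.preimage_homeo {α β : Type*} [TopologicalSpace α] [TopologicalSpace β]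
    (e : α ≃ₜ β) {s : Set β} (hs : IsMeagre s) : IsMeagre (e ⁻¹' s) := by
  rw [isMeagre_iff_countable_union_isNowhereDense] at hs ⊢
  obtain ⟨S, hnwd, hc, hsub⟩ := hs
  refine ⟨(fun t => e ⁻¹' t) '' S, ?_, hc.image _, ?_⟩
  · rintro t ⟨u, hu, rfl⟩
    have h := hnwd u hu
    rw [IsNowhereDense] at h ⊢
    rw [← e.preimage_closure, ← e.preimage_interior, h, Set.preimage_empty]
  · intro x hx
    obtain ⟨t, ht, hxt⟩ := hsub hx
    exact ⟨e ⁻¹' t, ⟨t, ht, rfl⟩, hxt⟩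

lemma meagre_of_nwd {α : Type*} [TopologicalSpace α] {s : Set α}
    (h : IsNowhereDense s) : IsMeagre s := by
  rw [isMeagre_iff_countable_union_isNowhereDense]
  exact ⟨{s}, by simpa using h, Set.countable_singleton s, by simp⟩

/-- xor homeomorphism -/
def xorHomeo (d : ℕ → Bool) : (ℕ → Bool) ≃ₜ (ℕ → Bool) where
  toFun x := fun n => xor (x n) (d n)
  invFun x := fun n => xor (x n) (d n)
  left_inv x := by funext n; cases h : x n <;> cases h2 : d n <;> simp [h, h2]
  right_inv x := by funext n; cases h : x n <;> cases h2 : d n <;> simp [h, h2]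
  continuous_toFun := continuous_pi fun n =>
    (continuous_of_discreteTopology (f := fun b => xor b (d n))).comp (continuous_apply n)
  continuous_invFun := continuous_pi fun n =>
    (continuous_of_discreteTopology (f := fun b => xor b (d n))).comp (continuous_apply n)

lemma mem_of_almost {F : Filter ℕ} (hF : F ≤ Filter.cofinite) {X Y : Set ℕ}
    (hX : X ∈ F) (h : (X \ Y).Finite) : Y ∈ F := by
  have h1 : (X \ Y)ᶜ ∈ F := hF (by simpa [Filter.mem_cofinite] using h)
  refine Filter.mem_of_superset (Filter.inter_mem hX h1) ?_
  rintro a ⟨ha, hb⟩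
  by_contra hy
  exact hb ⟨ha, hy⟩

lemma filterSet_invariant {F : Filter ℕ} (hcof : F ≤ Filter.cofinite)
    (d : ℕ → Bool) (hd : {n | d n = true}.Finite) (y : ℕ → Bool) :
    y ∈ filterSet F ↔ (xorHomeo d) y ∈ filterSet F := by
  have key : ∀ z w : ℕ → Bool, (∀ n, z n ≠ w n → d n = true) →
      z ∈ filterSet F → w ∈ filterSet F := by
    intro z w hzw hz
    refine mem_of_almost hcof hz (Set.Finite.subset hd ?_)
    rintro n ⟨hn1, hn2⟩
    simp only [Set.mem_setOf_eq] at hn1 hn2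
    apply hzw n
    rw [hn1]
    exact fun h => hn2 h.symm
  constructor
  · intro h
    refine key y _ (fun n hn => ?_) h
    by_contra hdn
    have : d n = false := by revert hdn; cases d n <;> simp
    apply hn
    show y n = xor (y n) (d n)
    rw [this]; simp
  · intro h
    refine key _ y (fun n hn => ?_) h
    by_contra hdn
    have : d n = false := by revert hdn; cases d n <;> simp
    apply hn
    show xor (y n) (d n) = y n
    rw [this]; simp

lemma meagre_of_BP (F : Filter ℕ) (hne : F.NeBot) (hcof : F ≤ Filter.cofinite)
    (hbp : HasBaireProperty (filterSet F)) : IsMeagre (filterSet F) := by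
  classical
  by_contra hnm
  obtain ⟨U, M, hU, hM, hSM⟩ := hbp
  set S := filterSet F with hS
  have hUS : U \ S ⊆ M := by
    intro z hz
    rcases hz with ⟨hzU, hzS⟩
    by_contra hzM
    exact hzS (by rw [hSM]; exact Or.inl ⟨hzU, hzM⟩)
  have hUne : U.Nonempty := by
    rcases U.eq_empty_or_nonempty with h | h
    · exfalso; apply hnm
      have : S = M := by rw [hSM, h]; simp [symmDiff]
      rw [this]; exact hM
    · exact h
  obtain ⟨x, hx⟩ := hUne
  obtain ⟨N, hN⟩ := exists_cyl_subset hU hx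
  -- every N-cylinder minus S is meagre
  have hcylm : ∀ t : ℕ → Bool, IsMeagre (Cyl t N \ S) := by
    intro t
    set d : ℕ → Bool := fun n => if n < N then xor (t n) (x n) else false with hdef
    have hdfin : {n | d n = true}.Finite := by
      apply Set.Finite.subset (Set.finite_Iio N)
      intro n hn
      simp only [Set.mem_setOf_eq, hdef] at hn
      by_contra hnN
      simp only [Set.mem_Iio] at hnN
      rw [if_neg hnN] at hn
      exact Bool.false_ne_true hn
    have hmain : Cyl t N \ S ⊆ (xorHomeo d) ⁻¹' M := by
      intro y hy
      rcases hy with ⟨hyC, hyS⟩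
      apply hUS
      constructor
      · apply hN
        intro i hi
        have h1 : y i = t i := hyC i hi
        show xor (y i) (d i) = x i
        rw [h1, hdef]
        simp only [if_pos hi]
        cases t i <;> cases x i <;> rfl
      · intro hc
        exact hyS ((filterSet_invariant hcof d hdfin y).mpr hc)
    exact IsMeagre.mono hmain (IsMeagre.preimage_homeo _ hM)
  -- complement of S is meagre
  have hcompl : IsMeagre Sᶜ := by
    have hcover : Sᶜ ⊆ ⋃ t : Fin N → Bool,
        (Cyl (fun n => if h : n < N then t ⟨n, h⟩ else false) N \ S) := by
      intro y hy
      refine Set.mem_iUnion.mpr ⟨fun i => y i.1, ?_, hy⟩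
      intro i hi
      simp [dif_pos hi]
    refine IsMeagre.mono hcover ?_
    rw [IsMeagre, Set.compl_iUnion]
    exact (countable_iInter_mem).mpr fun t => hcylm _
  -- flip map sends S into Sᶜ
  have hflip : S ⊆ (xorHomeo (fun _ => true)) ⁻¹' Sᶜ := by
    intro y hy
    intro hc
    have h1 : {n | y n = true} ∈ F := hy
    have h2 : {n | xor (y n) true = true} ∈ F := hc
    have h3 : ({n | y n = true} ∩ {n | xor (y n) true = true}) ∈ F := Filter.inter_mem h1 h2
    have h4 : ({n | y n = true} ∩ {n | xor (y n) true = true}) = ∅ := by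
      ext n; simp only [Set.mem_inter_iff, Set.mem_setOf_eq, Set.mem_empty_iff_false, iff_false]
      rintro ⟨ha, hb⟩; rw [ha] at hb; simpa using hb
    rw [h4] at h3
    exact (Filter.empty_notMem F) h3
  exact hnm (IsMeagre.mono hflip (IsMeagre.preimage_homeo _ hcompl))

lemma interior_union_empty {X : Type*} [TopologicalSpace X] {s t : Set X}
    (hs : IsClosed s) (hs' : interior s = ∅) (ht' : interior t = ∅) :
    interior (s ∪ t) = ∅ := by
  rw [interior_eq_empty_iff_dense_compl] at hs' ht' ⊢
  rw [Set.compl_union]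
  exact hs'.inter_of_isOpen_left ht' hs.isOpen_compl

lemma cyl_extend {C : Set (ℕ → Bool)} (hC : IsClosed C) (hCi : interior C = ∅)
    (n : ℕ) (s : ℕ → Bool) :
    ∃ m, n ≤ m ∧ ∃ t : ℕ → Bool, (∀ i, i < n → t i = s i) ∧
      ∀ y : ℕ → Bool, (∀ i, i < m → y i = t i) → y ∉ C := by
  have hd : Dense Cᶜ := interior_eq_empty_iff_dense_compl.mp hCi
  obtain ⟨w, hwC, hwcyl⟩ := hd.exists_mem_open (isOpen_cyl s n) ⟨s, cyl_self s n⟩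
  obtain ⟨N, hN⟩ := exists_cyl_subset hC.isOpen_compl hwC
  refine ⟨max n N, le_max_left _ _, w, fun i hi => hwcyl i hi, ?_⟩
  intro y hy hyC
  have : y ∈ Cyl w N := fun i hi => hy i (lt_of_lt_of_le hi (le_max_right _ _))
  exact hN this hyC

/-- Talagrand: a meagre filter admits an interval partition such that every
member of the filter meets all but finitely many intervals. -/
lemma exists_partition_of_meagre (F : Filter ℕ) (hm : IsMeagre (filterSet F)) :
    ∃ e : ℕ → ℕ, StrictMono e ∧ e 0 = 0 ∧
      ∀ X ∈ F, {k | X ∩ Set.Ico (e k) (e (k + 1)) = ∅}.Finite := by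
  classical
  rw [isMeagre_iff_countable_union_isNowhereDense] at hm
  obtain ⟨S, hnwd, hSc, hsub⟩ := hm
  have hc' : (insert (∅ : Set (ℕ → Bool)) S).Countable := hSc.insert _
  obtain ⟨f, hf⟩ := Set.Countable.exists_eq_range hc' (Set.insert_nonempty _ _)
  have hfnwd : ∀ i, IsNowhereDense (f i) := by
    intro i
    have : f i ∈ insert (∅ : Set (ℕ → Bool)) S := hf ▸ Set.mem_range_self i
    rcases this with h | h
    · rw [h]; exact isNowhereDense_empty
    · exact hnwd _ h
  set A : ℕ → Set (ℕ → Bool) := fun k => ⋃ i ∈ Finset.range (k + 1), closure (f i) with hA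
  have hAclosed : ∀ k, IsClosed (A k) :=
    fun k => isClosed_biUnion_finset fun i _ => isClosed_closure
  have hAint : ∀ k, interior (A k) = ∅ := by
    intro k
    induction k with
    | zero =>
      have h0 : A 0 = closure (f 0) := by simp [hA]
      rw [h0]
      exact hfnwd 0
    | succ k ih =>
      have h1 : A (k + 1) = A k ∪ closure (f (k + 1)) := by
        simp only [hA]
        rw [Finset.range_add_one, Finset.set_biUnion_insert, Set.union_comm]
      rw [h1]
      exact interior_union_empty (hAclosed k) ih (hfnwd (k + 1))
  have hAmono : ∀ j k, j ≤ k → A j ⊆ A k := by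
    intro j k hjk
    intro x hx
    simp only [hA, Set.mem_iUnion, Finset.mem_range] at hx ⊢
    obtain ⟨i, hi, hxi⟩ := hx
    exact ⟨i, by omega, hxi⟩
  have hcover : filterSet F ⊆ ⋃ k, A k := by
    intro y hy
    obtain ⟨t, ht, hyt⟩ := hsub hy
    have h2 : t ∈ insert (∅ : Set (ℕ → Bool)) S := Set.mem_insert_of_mem _ ht
    rw [hf] at h2
    obtain ⟨i, rfl⟩ := h2
    refine Set.mem_iUnion.mpr ⟨i, ?_⟩
    simp only [hA, Set.mem_iUnion]
    exact ⟨i, Finset.self_mem_range_succ i, subset_closure hyt⟩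
  -- key extension property, uniformly over patterns below n
  have key : ∀ k n : ℕ, ∃ m, n < m ∧ ∀ s : ℕ → Bool, ∃ t : ℕ → Bool,
      (∀ i, i < n → t i = s i) ∧ ∀ y : ℕ → Bool, (∀ i, i < m → y i = t i) → y ∉ A k := by
    intro k n
    have hext : ∀ σ : Fin n → Bool, ∃ m, n ≤ m ∧ ∃ t : ℕ → Bool,
        (∀ i, i < n → t i = (fun j => if h : j < n then σ ⟨j, h⟩ else false) i) ∧
        ∀ y : ℕ → Bool, (∀ i, i < m → y i = t i) → y ∉ A k :=
      fun σ => cyl_extend (hAclosed k) (hAint k) n _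
    choose mf hmf tf htf1 htf2 using hext
    refine ⟨n + 1 + Finset.univ.sup mf, by omega, ?_⟩
    intro s
    refine ⟨tf (fun i => s i.1), fun i hi => ?_, ?_⟩
    · rw [htf1 _ i hi]
      simp [hi]
    · intro y hy
      apply htf2 (fun i => s i.1)
      intro i hi
      apply hy
      have : mf (fun i : Fin n => s i.1) ≤ Finset.univ.sup mf :=
        Finset.le_sup (Finset.mem_univ _)
      omega
  choose M hMlt hMs using key
  choose T hT1 hT2 using hMs
  -- the partition
  let e : ℕ → ℕ := fun k => Nat.rec 0 (fun k ih => M k ih) k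
  have he0 : e 0 = 0 := rfl
  have heS : ∀ k, e (k + 1) = M k (e k) := fun _ => rfl
  have hemono : StrictMono e := strictMono_nat_of_lt_succ fun k => by
    rw [heS]; exact hMlt k (e k)
  have hle : ∀ k, k ≤ e k := by
    intro k
    induction k with
    | zero => omega
    | succ k ih =>
      have h2 : e k < e (k + 1) := hemono (Nat.lt_succ_self k)
      omega
  refine ⟨e, hemono, he0, ?_⟩
  intro X hX
  by_contra hbad
  set bad := {k | X ∩ Set.Ico (e k) (e (k + 1)) = ∅} with hbaddef
  have hbadinf : bad.Infinite := hbad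
  set x0 : ℕ → Bool := fun n => decide (n ∈ X) with hx0
  let z : ℕ → (ℕ → Bool) := fun k => Nat.rec x0
    (fun k zk => if k ∈ bad then
      (fun i => if i < e (k + 1) then T k (e k) zk i else zk i) else zk) k
  have hz0 : z 0 = x0 := rfl
  have hzS : ∀ k, z (k + 1) = if k ∈ bad then
      (fun i => if i < e (k + 1) then T k (e k) (z k) i else z k i) else z k := fun _ => rfl
  have hstep : ∀ K i, i < e K → z (K + 1) i = z K i := by
    intro K i hi
    rw [hzS]
    split
    · simp only
      rw [if_pos (lt_of_lt_of_le hi (hemono.monotone (Nat.le_succ K)))]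
      exact hT1 K (e K) (z K) i hi
    · rfl
  have hstab : ∀ k K, k ≤ K → ∀ i, i < e k → z K i = z k i := by
    intro k K hkK
    induction K, hkK using Nat.le_induction with
    | base => intro i _; rfl
    | succ K hk ih =>
      intro i hi
      rw [hstep K i (lt_of_lt_of_le hi (hemono.monotone hk))]
      exact ih i hi
  have hsup : ∀ k i, x0 i = true → z k i = true := by
    intro k
    induction k with
    | zero => intro i h; exact h
    | succ k ih =>
      intro i h
      rw [hzS]
      split
      · next hkbad =>
        simp only
        split
        · next hilt =>
          rcases Nat.lt_or_ge i (e k) with h2 | h2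
          · rw [hT1 k (e k) (z k) i h2]; exact ih i h
          · exfalso
            have hiX : i ∈ X := by simpa [hx0] using h
            have hmem : i ∈ X ∩ Set.Ico (e k) (e (k + 1)) := ⟨hiX, h2, hilt⟩
            have : X ∩ Set.Ico (e k) (e (k + 1)) = ∅ := hkbad
            rw [this] at hmem
            exact hmem
        · exact ih i h
      · exact ih i h
  set y : ℕ → Bool := fun i => z (i + 1) i with hydef
  have hkey : ∀ k i, i < e (k + 1) → y i = z (k + 1) i := by
    intro k i hi
    rcases Nat.le_total (i + 1) (k + 1) with h | h
    · exact (hstab (i + 1) (k + 1) h i (lt_of_lt_of_le (Nat.lt_succ_self i) (hle (i + 1)))).symm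
    · exact hstab (k + 1) (i + 1) h i hi
  have hyF : y ∈ filterSet F := by
    refine Filter.mem_of_superset hX ?_
    intro i hiX
    show y i = true
    exact hsup (i + 1) i (by simp [hx0, hiX])
  obtain ⟨j, hj⟩ := Set.mem_iUnion.mp (hcover hyF)
  obtain ⟨k, hkbad, hjk⟩ := hbadinf.exists_gt j
  have hyA : y ∉ A k := by
    apply hT2 k (e k) (z k)
    intro i hi
    have hi' : i < e (k + 1) := by rw [heS]; exact hi
    rw [hkey k i hi', hzS k, if_pos hkbad]
    show (if i < e (k + 1) then T k (e k) (z k) i else z k i) = T k (e k) (z k) i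
    rw [if_pos hi']
  exact hyA (hAmono j k (le_of_lt hjk) hj)

/-- A non-meagre filter has, for every interval partition, a member missing
infinitely many intervals. -/
lemma exists_escape (F : Filter ℕ) (hnm : ¬ IsMeagre (filterSet F))
    (e : ℕ → ℕ) (he : StrictMono e) :
    ∃ X ∈ F, {k | X ∩ Set.Ico (e k) (e (k + 1)) = ∅}.Infinite := by
  classical
  by_contra h
  push_neg at h
  apply hnm
  have hle : ∀ k, k ≤ e k := fun k => by
    induction k with
    | zero => omega
    | succ k ih =>
      have h2 : e k < e (k + 1) := he (Nat.lt_succ_self k)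
      omega
  set C : ℕ → Set (ℕ → Bool) := fun j =>
    {x | ∀ k, j ≤ k → ∃ i, i ∈ Set.Ico (e k) (e (k + 1)) ∧ x i = true} with hC
  have hsub : filterSet F ⊆ ⋃ j, C j := by
    intro x hx
    have hXF : {n | x n = true} ∈ F := hx
    have hfin : {k | {n | x n = true} ∩ Set.Ico (e k) (e (k + 1)) = ∅}.Finite := by
      by_contra hinf
      exact hinf (h _ hXF)
    obtain ⟨b, hb⟩ := hfin.bddAbove
    refine Set.mem_iUnion.mpr ⟨b + 1, ?_⟩
    intro k hk
    have hne : {n | x n = true} ∩ Set.Ico (e k) (e (k + 1)) ≠ ∅ := by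
      intro heq
      have : k ≤ b := hb heq
      omega
    obtain ⟨i, hi1, hi2⟩ := Set.nonempty_iff_ne_empty.mpr hne
    exact ⟨i, hi2, hi1⟩
  have hCclosed : ∀ j, IsClosed (C j) := by
    intro j
    have : C j = ⋂ k, ⋂ (_ : j ≤ k), ⋃ i ∈ Finset.Ico (e k) (e (k + 1)),
        {x : ℕ → Bool | x i = true} := by
      ext x
      simp only [hC, Set.mem_setOf_eq, Set.mem_iInter, Set.mem_iUnion, Finset.mem_Ico,
        Set.mem_Ico]
      constructor
      · intro hx k hk
        obtain ⟨i, hi1, hi2⟩ := hx k hk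
        exact ⟨i, hi1, hi2⟩
      · intro hx k hk
        obtain ⟨i, hi1, hi2⟩ := hx k hk
        exact ⟨i, hi1, hi2⟩
    rw [this]
    exact isClosed_iInter fun k => isClosed_iInter fun _ =>
      isClosed_biUnion_finset fun i _ => isClosed_eval i true
  have hCnwd : ∀ j, IsNowhereDense (C j) := by
    intro j
    rw [(hCclosed j).isNowhereDense_iff]
    rw [Set.eq_empty_iff_forall_notMem]
    intro x hx
    obtain ⟨N, hN⟩ := exists_cyl_subset isOpen_interior hx
    set k := max j N with hk
    set y : ℕ → Bool := fun i => if e k ≤ i then false else x i with hy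
    have hyC : y ∈ C j := by
      apply interior_subset
      apply hN
      intro i hi
      have h3 : i < e k := lt_of_lt_of_le hi (le_trans (le_max_right j N) (hle k))
      simp [hy, not_le.mpr h3]
    obtain ⟨i, hi1, hi2⟩ := hyC k (le_max_left j N)
    simp only [Set.mem_Ico] at hi1
    have hi2' : (if e k ≤ i then false else x i) = true := hi2
    rw [if_pos hi1.1] at hi2'
    exact Bool.false_ne_true hi2'
  exact IsMeagre.mono hsub (isMeagre_iUnion fun j => meagre_of_nwd (hCnwd j))

/-- the `k`-th interval of the partition given by boundaries `e` -/
def Iv (e : ℕ → ℕ) (k : ℕ) : Set ℕ := Set.Ico (e k) (e (k + 1))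

/-- interval envelope of a set -/
def env (e : ℕ → ℕ) (x : Set ℕ) : Set ℕ :=
  {m | ∃ k, m ∈ Iv e k ∧ (x ∩ Iv e k).Nonempty}

lemma idx_exists (e : ℕ → ℕ) (he : StrictMono e) (he0 : e 0 = 0) :
    ∀ m, ∃ k, m ∈ Iv e k := by
  intro m
  induction m with
  | zero =>
    refine ⟨0, ?_⟩
    have h1 : e 0 < e (0 + 1) := he (by omega)
    simp only [Iv, Set.mem_Ico, he0] at h1 ⊢
    omega
  | succ m ih =>
    obtain ⟨k, hk⟩ := ih
    simp only [Iv, Set.mem_Ico] at hk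
    rcases Nat.lt_or_ge (m + 1) (e (k + 1)) with h | h
    · exact ⟨k, by simp only [Iv, Set.mem_Ico]; omega⟩
    · refine ⟨k + 1, ?_⟩
      have h2 : e (k + 1) < e (k + 1 + 1) := he (by omega)
      simp only [Iv, Set.mem_Ico]
      omega

lemma idx_unique (e : ℕ → ℕ) (he : StrictMono e) {m k k' : ℕ}
    (h : m ∈ Iv e k) (h' : m ∈ Iv e k') : k = k' := by
  simp only [Iv, Set.mem_Ico] at h h'
  by_contra hne
  rcases Nat.lt_or_ge k k' with hlt | hge
  · have : e (k + 1) ≤ e k' := he.monotone hlt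
    omega
  · have hlt : k' < k := by omega
    have : e (k' + 1) ≤ e k := he.monotone hlt
    omega

lemma env_finite (e : ℕ → ℕ) (he : StrictMono e) (he0 : e 0 = 0) {x : Set ℕ}
    (hx : x.Finite) : (env e x).Finite := by
  classical
  choose idxf hidxf using idx_exists e he he0
  have hsub : env e x ⊆ ⋃ p ∈ x, Iv e (idxf p) := by
    rintro m ⟨k, hmk, p, hpx, hpk⟩
    have : k = idxf p := idx_unique e he hpk (hidxf p)
    exact Set.mem_biUnion hpx (this ▸ hmk)
  exact ((hx.biUnion fun p _ => Set.finite_Ico _ _).subset hsub)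

lemma blocks_disjoint (e' : ℕ → ℕ) (he' : StrictMono e') {j j' m : ℕ} (hne : j ≠ j')
    (h1 : m ∈ Set.Ico (e' j) (e' (j + 1))) (h2 : m ∈ Set.Ico (e' j') (e' (j' + 1))) :
    False := by
  simp only [Set.mem_Ico] at h1 h2
  rcases Nat.lt_or_ge j j' with hlt | hge
  · have : e' (j + 1) ≤ e' j' := he'.monotone hlt
    omega
  · have hlt : j' < j := by omega
    have : e' (j' + 1) ≤ e' j := he'.monotone hlt
    omega

/-- the groupwise dense family attached to a filter `F` and the partition `e` -/
def gD (e : ℕ → ℕ) (F : Filter ℕ) : Set (Set ℕ) :=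
  {x : Set ℕ | x.Infinite ∧ (env e x)ᶜ ∈ F}

lemma groupwiseDense_gD (e : ℕ → ℕ) (he : StrictMono e) (he0 : e 0 = 0)
    (F : Filter ℕ) (hcof : F ≤ Filter.cofinite)
    (hnm : ¬ IsMeagre (filterSet F)) : GroupwiseDense (gD e F) := by
  classical
  choose idxf hidxf using idx_exists e he he0
  refine ⟨fun x hx => hx.1, ?_, ?_, ?_⟩
  · -- density
    intro x hx
    choose pf hpf1 hpf2 using (fun n : ℕ => hx.exists_gt (e n))
    set stepf : ℕ → ℕ := fun n => idxf (pf n) + 1 with hstepf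
    set f : ℕ → ℕ := fun j => stepf^[j] 0 with hfdef
    have hfS : ∀ j, f (j + 1) = idxf (pf (f j)) + 1 := by
      intro j
      show stepf^[j + 1] 0 = _
      rw [Function.iterate_succ_apply']
    have hfidx : ∀ j, f j ≤ idxf (pf (f j)) := by
      intro j
      have h1 : e (f j) < pf (f j) := hpf2 _
      have h2 : pf (f j) < e (idxf (pf (f j)) + 1) := (hidxf (pf (f j))).2
      have h3 : e (f j) < e (idxf (pf (f j)) + 1) := by omega
      have h4 := he.lt_iff_lt.mp h3
      omega
    have hfmono : StrictMono f := strictMono_nat_of_lt_succ fun j => by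
      have := hfidx j; rw [hfS]; omega
    obtain ⟨X, hXF, hXinf⟩ := exists_escape F hnm (fun j => e (f j)) (he.comp hfmono)
    have hblock : ∀ j, Iv e (idxf (pf (f j))) ⊆ Set.Ico (e (f j)) (e (f (j + 1))) := by
      intro j m hm
      rcases hm with ⟨hm1, hm2⟩
      refine ⟨le_trans (he.monotone (hfidx j)) hm1, ?_⟩
      rw [hfS j]; exact hm2
    have hinj : Set.InjOn (fun j => pf (f j))
        {j | X ∩ Set.Ico (e (f j)) (e (f (j + 1))) = ∅} := by
      intro j _ j' _ heq
      by_contra hne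
      have heq' : pf (f j) = pf (f j') := heq
      refine blocks_disjoint (fun j => e (f j)) (he.comp hfmono) hne
        (hblock j (hidxf (pf (f j)))) ?_
      show pf (f j) ∈ Set.Ico (e (f j')) (e (f (j' + 1)))
      rw [heq']
      exact hblock j' (hidxf (pf (f j')))
    refine ⟨(fun j => pf (f j)) '' {j | X ∩ Set.Ico (e (f j)) (e (f (j + 1))) = ∅},
      ⟨hXinf.image hinj, ?_⟩, ?_⟩
    · refine Filter.mem_of_superset hXF ?_
      intro q hq hqenv
      obtain ⟨k, hqk, r, hry, hrk⟩ := hqenv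
      obtain ⟨j, hjb, rfl⟩ := hry
      have hk : k = idxf (pf (f j)) := idx_unique e he hrk (hidxf _)
      have h2 : q ∈ X ∩ Set.Ico (e (f j)) (e (f (j + 1))) := ⟨hq, hblock j (hk ▸ hqk)⟩
      have h3 : X ∩ Set.Ico (e (f j)) (e (f (j + 1))) = ∅ := hjb
      rw [h3] at h2
      exact h2
    · rintro q ⟨j, hj, rfl⟩
      exact hpf1 _
  · -- almost-subset downward closure
    intro x y hx hxy hyg
    obtain ⟨hyinf, hyF⟩ := hyg
    refine ⟨hx, ?_⟩
    have h1 : env e x ⊆ env e y ∪ env e (x \ y) := by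
      rintro m ⟨k, hmk, p, hpx, hpk⟩
      by_cases hpy : p ∈ y
      · exact Or.inl ⟨k, hmk, p, hpy, hpk⟩
      · exact Or.inr ⟨k, hmk, p, ⟨hpx, hpy⟩, hpk⟩
    have h2 : (env e (x \ y)).Finite := env_finite e he he0 hxy
    have h3 : (env e (x \ y))ᶜ ∈ F := hcof (by simp [Filter.mem_cofinite, h2])
    refine Filter.mem_of_superset (Filter.inter_mem hyF h3) ?_
    rintro m ⟨hm1, hm2⟩ hmx
    rcases h1 hmx with h | h
    · exact hm1 h
    · exact hm2 h
  · -- partition condition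
    intro J hJfin hJdisj hJcover
    have hNE : {n | (J n).Nonempty}.Infinite := by
      by_contra hfin
      rw [Set.not_infinite] at hfin
      have hsub2 : (⋃ n, J n) ⊆ ⋃ n ∈ {n | (J n).Nonempty}, J n := by
        intro m hm
        obtain ⟨n, hn⟩ := Set.mem_iUnion.mp hm
        exact Set.mem_biUnion ⟨m, hn⟩ hn
      have : (Set.univ : Set ℕ).Finite := by
        rw [← hJcover]
        exact (hfin.biUnion fun n _ => hJfin n).subset hsub2
      exact Set.infinite_univ this
    have hmeet : ∀ bnd : ℕ, {n | (J n ∩ Set.Iio bnd).Nonempty}.Finite := by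
      intro bnd
      set cfun : ℕ → ℕ := fun n =>
        if h : (J n ∩ Set.Iio bnd).Nonempty then h.choose else 0 with hcfun
      have hcmem : ∀ n, (J n ∩ Set.Iio bnd).Nonempty → cfun n ∈ J n ∩ Set.Iio bnd := by
        intro n hn
        have : cfun n = hn.choose := dif_pos hn
        rw [this]
        exact hn.choose_spec
      have hcinj : Set.InjOn cfun {n | (J n ∩ Set.Iio bnd).Nonempty} := by
        intro n hn n' hn' heq
        by_contra hne
        have h1 := (hcmem n hn).1
        have h2 := (hcmem n' hn').1
        rw [heq] at h1
        exact Set.disjoint_left.mp (hJdisj hne) h1 h2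
      refine Set.Finite.of_finite_image ?_ hcinj
      refine (Set.finite_Iio bnd).subset ?_
      rintro q ⟨n, hn, rfl⟩
      exact (hcmem n hn).2
    have hwit : ∀ bnd : ℕ, ∃ n, (J n).Nonempty ∧ J n ∩ Set.Iio bnd = ∅ := by
      intro bnd
      obtain ⟨n, hn1, hn2⟩ := (hNE.diff (hmeet bnd)).nonempty
      exact ⟨n, hn1, Set.not_nonempty_iff_eq_empty.mp hn2⟩
    choose wf hwf1 hwf2 using hwit
    set stepf : ℕ → ℕ := fun n => ((hJfin (wf (e n))).toFinset.sup idxf) + 1 with hstepf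
    set f : ℕ → ℕ := fun j => stepf^[j] 0 with hfdef
    set w : ℕ → ℕ := fun j => wf (e (f j)) with hwdef
    have hfS : ∀ j, f (j + 1) = ((hJfin (w j)).toFinset.sup idxf) + 1 := by
      intro j
      show stepf^[j + 1] 0 = _
      rw [Function.iterate_succ_apply']
    have hwlow : ∀ j q, q ∈ J (w j) → e (f j) ≤ q := by
      intro j q hq
      by_contra hlt
      have h1 : q ∈ J (w j) ∩ Set.Iio (e (f j)) := ⟨hq, by simp only [Set.mem_Iio]; omega⟩
      have h2 : J (w j) ∩ Set.Iio (e (f j)) = ∅ := hwf2 (e (f j))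
      rw [h2] at h1
      exact h1
    have hidxlow : ∀ j q, q ∈ J (w j) → f j ≤ idxf q := by
      intro j q hq
      have h1 : e (f j) ≤ q := hwlow j q hq
      have h2 : q < e (idxf q + 1) := (hidxf q).2
      have h3 : e (f j) < e (idxf q + 1) := by omega
      have h4 := he.lt_iff_lt.mp h3
      omega
    have hidxhigh : ∀ j q, q ∈ J (w j) → idxf q < f (j + 1) := by
      intro j q hq
      rw [hfS]
      have : idxf q ≤ (hJfin (w j)).toFinset.sup idxf :=
        Finset.le_sup ((hJfin (w j)).mem_toFinset.mpr hq)
      omega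
    have hfmono : StrictMono f := strictMono_nat_of_lt_succ fun j => by
      obtain ⟨q, hq⟩ := hwf1 (e (f j))
      have h1 := hidxlow j q hq
      have h2 := hidxhigh j q hq
      omega
    have hblock : ∀ j q, q ∈ J (w j) → Iv e (idxf q) ⊆ Set.Ico (e (f j)) (e (f (j + 1))) := by
      intro j q hq m hm
      rcases hm with ⟨hm1, hm2⟩
      exact ⟨le_trans (he.monotone (hidxlow j q hq)) hm1,
        lt_of_lt_of_le hm2 (he.monotone (Nat.succ_le_of_lt (hidxhigh j q hq)))⟩
    obtain ⟨X, hXF, hXinf⟩ := exists_escape F hnm (fun j => e (f j)) (he.comp hfmono)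
    set b := {j | X ∩ Set.Ico (e (f j)) (e (f (j + 1))) = ∅} with hb
    set qfun : ℕ → ℕ := fun j => (hwf1 (e (f j))).choose with hqfun
    have hqmem : ∀ j, qfun j ∈ J (w j) := fun j => (hwf1 (e (f j))).choose_spec
    have hqblock : ∀ j, qfun j ∈ Set.Ico (e (f j)) (e (f (j + 1))) :=
      fun j => hblock j (qfun j) (hqmem j) (hidxf (qfun j))
    have hwinj : Set.InjOn w b := by
      intro j _ j' _ heq
      by_contra hne
      refine blocks_disjoint (fun j => e (f j)) (he.comp hfmono) hne
        (hblock j (qfun j) (hqmem j) (hidxf (qfun j))) ?_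
      refine hblock j' (qfun j) ?_ (hidxf (qfun j))
      rw [← heq]
      exact hqmem j
    have hqinj : Set.InjOn qfun b := by
      intro j _ j' _ heq
      by_contra hne
      refine blocks_disjoint (fun j => e (f j)) (he.comp hfmono) hne (hqblock j) ?_
      rw [heq]
      exact hqblock j'
    refine ⟨w '' b, hXinf.image hwinj, ?_, ?_⟩
    · -- union is infinite
      refine (hXinf.image hqinj).mono ?_
      rintro q ⟨j, hj, rfl⟩
      exact Set.mem_biUnion (Set.mem_image_of_mem w hj) (hqmem j)
    · -- complement of envelope in F
      refine Filter.mem_of_superset hXF ?_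
      intro p hp hpenv
      obtain ⟨k, hpk, r, hrU, hrk⟩ := hpenv
      obtain ⟨n, hn, hrn⟩ := Set.mem_iUnion₂.mp hrU
      obtain ⟨j, hjb, rfl⟩ := hn
      have hk : k = idxf r := idx_unique e he hrk (hidxf r)
      have h2 : p ∈ X ∩ Set.Ico (e (f j)) (e (f (j + 1))) := ⟨hp, hblock j r hrn (hk ▸ hpk)⟩
      have h3 : X ∩ Set.Ico (e (f j)) (e (f (j + 1))) = ∅ := hjb
      rw [h3] at h2
      exact h2

lemma hasBP_of_meagre {S : Set (ℕ → Bool)} (h : IsMeagre S) : HasBaireProperty S :=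
  ⟨∅, S, isOpen_empty, h, by simp [symmDiff_def]⟩

/-- Repický's inequality `𝔤 ≤ 𝔣_ℳ`: if `H` is a nonempty family of free filters on `ℕ`, each
without the Baire property as a subset of the Cantor space, whose intersection has the Baire
property, then there is a family `G` of at most `|H|` many groupwise dense subsets of
`[ℕ]^ℕ` with empty intersection. -/
theorem groupwise_dense_family_of_filters_without_BP (H : Set (Filter ℕ)) (hne : H.Nonempty)
    (hfree : ∀ F ∈ H, F.NeBot ∧ F ≤ Filter.cofinite)
    (hnbp : ∀ F ∈ H, ¬ HasBaireProperty (filterSet F))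
    (hint : HasBaireProperty (⋂ F ∈ H, filterSet F)) :
    ∃ G : Set (Set (Set ℕ)),
      Cardinal.mk G ≤ Cardinal.mk H ∧
      (∀ g ∈ G, GroupwiseDense g) ∧
      ⋂₀ G = ∅ := by
  classical
  have hIeq : (⋂ F ∈ H, filterSet F) = filterSet (sSup H) := by
    ext x
    simp [filterSet, Filter.mem_sSup]
  have hne' : (sSup H).NeBot := by
    obtain ⟨F0, hF0⟩ := hne
    exact Filter.NeBot.mono (hfree F0 hF0).1 (le_sSup hF0)
  have hcof : sSup H ≤ Filter.cofinite := sSup_le fun F hF => (hfree F hF).2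
  rw [hIeq] at hint
  obtain ⟨e, he, he0, hTal⟩ := exists_partition_of_meagre _ (meagre_of_BP _ hne' hcof hint)
  refine ⟨(fun F => gD e F) '' H, Cardinal.mk_image_le, ?_, ?_⟩
  · rintro g ⟨F, hF, rfl⟩
    exact groupwiseDense_gD e he he0 F (hfree F hF).2
      (fun hm => hnbp F hF (hasBP_of_meagre hm))
  · rw [Set.eq_empty_iff_forall_notMem]
    intro x hxint
    obtain ⟨F0, hF0⟩ := hne
    have hx0 : x ∈ gD e F0 := hxint _ (Set.mem_image_of_mem _ hF0)
    have hxinf : x.Infinite := hx0.1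
    have hmemall : (env e x)ᶜ ∈ sSup H := by
      rw [Filter.mem_sSup]
      intro F hF
      exact (hxint _ (Set.mem_image_of_mem _ hF)).2
    have hfin := hTal _ hmemall
    have hKinf : {k | (x ∩ Iv e k).Nonempty}.Infinite := by
      by_contra hKfin
      rw [Set.not_infinite] at hKfin
      have hsub : x ⊆ ⋃ k ∈ {k | (x ∩ Iv e k).Nonempty}, Iv e k := by
        intro m hm
        obtain ⟨k, hk⟩ := idx_exists e he he0 m
        exact Set.mem_biUnion ⟨m, hm, hk⟩ hk
      exact hxinf ((hKfin.biUnion fun k _ => Set.finite_Ico _ _).subset hsub)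
    have hss : {k | (x ∩ Iv e k).Nonempty} ⊆
        {k | (env e x)ᶜ ∩ Set.Ico (e k) (e (k + 1)) = ∅} := by
      intro k hk
      show (env e x)ᶜ ∩ Set.Ico (e k) (e (k + 1)) = ∅
      rw [Set.eq_empty_iff_forall_notMem]
      rintro m ⟨hm1, hm2⟩
      exact hm1 ⟨k, hm2, hk⟩
    exact hKinf (hfin.subset hss)
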